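/- generate2 soundness: For a valid directed policy G = (V,E), the stateful policy (V, E, (filterACS G M e) ∩ (filterIFS G M e)) satisfies both the IFS compliance condition (all IFS invariants hold on its α-image) and the ACS compliance condition (⋃ get_offending_flows (getACS M) of its α-image is contained in backflows(E_σ) \ E). -/

import Mathlib

def backflows {α : Type*} (X : Set (α × α)) : Set (α × α) :=
  {e | (e.2, e.1) ∈ X}

def offending_flows {α : Type*} (m : Set α → Set (α × α) → Prop)
    (V : Set α) (E : Set (α × α)) : Set (Set (α × α)) :=
  {F | F ⊆ E ∧ ¬ m V E ∧ m V (E \ F) ∧ ∀ e ∈ F, ¬ m V ((E \ F) ∪ {e})}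

def get_offending_flows {α : Type*} (M : Set (Set α → Set (α × α) → Prop))
    (V : Set α) (E : Set (α × α)) : Set (Set (α × α)) :=
  ⋃ m ∈ M, offending_flows m V E

inductive Strategy : Type
  | IFS : Strategy
  | ACS : Strategy

structure SecurityInvariant (α : Type*) where
  pred : Set α → Set (α × α) → Prop
  strat : Strategy

/-- the predicates of the IFS-tagged invariants -/
def getIFS {α : Type*} (M : Set (SecurityInvariant α)) :
    Set (Set α → Set (α × α) → Prop) :=
  {f | ∃ m ∈ M, m.strat = Strategy.IFS ∧ f = m.pred}

/-- the predicates of the ACS-tagged invariants -/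
def getACS {α : Type*} (M : Set (SecurityInvariant α)) :
    Set (Set α → Set (α × α) → Prop) :=
  {f | ∃ m ∈ M, m.strat = Strategy.ACS ∧ f = m.pred}

open Classical in
/-- greedy IFS filter; list accumulators are read as sets via `{x | x ∈ ·}` -/
noncomputable def filterIFS {α : Type*} (V : Set α) (E : Set (α × α))
    (M : Set (SecurityInvariant α)) :
    List (α × α) → List (α × α) → List (α × α)
  | a, [] => a
  | a, e :: es =>
    if ∀ m ∈ getIFS M,
        m V (E ∪ {x | x ∈ e :: a} ∪ backflows {x | x ∈ e :: a})
    then filterIFS V E M (e :: a) es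
    else filterIFS V E M a es

open Classical in
/-- greedy ACS filter -/
noncomputable def filterACS {α : Type*} (V : Set α) (E : Set (α × α))
    (M : Set (SecurityInvariant α)) :
    List (α × α) → List (α × α) → List (α × α)
  | a, [] => a
  | a, e :: es =>
    if e ∉ backflows E ∧
        ∀ F ∈ get_offending_flows (getACS M) V
            (E ∪ {x | x ∈ e :: a} ∪ backflows {x | x ∈ e :: a}),
          F ⊆ backflows {x | x ∈ e :: a}
    then filterACS V E M (e :: a) es
    else filterACS V E M a es

/-!
The IFS part is immediate: the IFS filter maintains "all IFS invariants hold on the α-image of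
the selected edges", and monotonicity carries this to the smaller selection `A ∩ I`.

For the ACS part the point is that deleting an edge `y` never creates a new offending edge: an
offending flow `F` of `E \ {y}` is either already offending for `E` or becomes so as `F ∪ {y}`.
Hence every offending flow on the α-image of `A ∩ I` lies in `backflows A`, which the ACS filter
keeps disjoint from `E`; an edge of the α-image outside `E` is a backflow of `A ∩ I`.
-/

/-- The edge set of the paper's `α (V, E, X)`. -/
def alphaEdges {β : Type*} (E X : Set (β × β)) : Set (β × β) :=
  E ∪ X ∪ backflows X

section Graphs

variable {β : Type*}

lemma backflows_mono {X Y : Set (β × β)} (h : X ⊆ Y) : backflows X ⊆ backflows Y :=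
  fun _ hx => h hx

lemma Set.Finite.backflows {X : Set (β × β)} (h : X.Finite) : (_root_.backflows X).Finite := by
  have : _root_.backflows X = Prod.swap '' X := by rw [Set.image_swap_eq_preimage_swap]; rfl
  exact this ▸ h.image _

lemma alphaEdges_empty (E : Set (β × β)) : alphaEdges E ∅ = E := by
  ext x; simp [alphaEdges, backflows]

lemma alphaEdges_mono (E : Set (β × β)) {X Y : Set (β × β)} (h : X ⊆ Y) :
    alphaEdges E X ⊆ alphaEdges E Y :=
  Set.union_subset_union (Set.union_subset_union_right E h) (backflows_mono h)

end Graphs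

section OffendingFlows

variable {β : Type*} {V : Set β}

lemma sUnion_get_offending_flows_subset (M' : Set (Set β → Set (β × β) → Prop))
    (E : Set (β × β)) : ⋃₀ get_offending_flows M' V E ⊆ E := by
  rintro x ⟨F, hF, hx⟩
  simp only [get_offending_flows, Set.mem_iUnion] at hF
  obtain ⟨m, -, hF⟩ := hF
  exact hF.1 hx

lemma get_offending_flows_eq_empty {M' : Set (Set β → Set (β × β) → Prop)} {E : Set (β × β)}
    (h : ∀ m ∈ M', m V E) : get_offending_flows M' V E = ∅ := by
  refine Set.eq_empty_iff_forall_notMem.mpr fun F hF => ?_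
  simp only [get_offending_flows, Set.mem_iUnion] at hF
  obtain ⟨m, hm, hF⟩ := hF
  exact hF.2.1 (h m hm)

variable {m : Set β → Set (β × β) → Prop}

lemma offending_flows_of_diff_singleton (hmono : ∀ E₁ E₂, m V E₁ → E₂ ⊆ E₁ → m V E₂)
    {E F : Set (β × β)} {y : β × β} (hF : F ∈ offending_flows m V (E \ {y})) :
    F ∈ offending_flows m V E ∨ insert y F ∈ offending_flows m V E := by
  obtain ⟨hFE, hnot, hres, hmin⟩ := hF
  have hnotE : ¬ m V E := fun h => hnot (hmono _ _ h Set.sdiff_subset)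
  have hminE : ∀ w ∈ F, ¬ m V ((E \ F) ∪ {w}) := fun w hw h =>
    hmin w hw (hmono _ _ h (Set.union_subset_union_left _ (Set.sdiff_subset_sdiff_left
      Set.sdiff_subset)))
  by_cases hEF : m V (E \ F)
  · exact Or.inl ⟨hFE.trans Set.sdiff_subset, hnotE, hEF, hminE⟩
  have hyF : y ∉ F := fun h => (hFE h).2 rfl
  have hyE : y ∈ E := by
    by_contra hyE
    exact hEF (by rwa [Set.sdiff_singleton_eq_self hyE] at hres)
  have hdiff : E \ insert y F = (E \ {y}) \ F := by
    rw [Set.insert_eq, ← Set.sdiff_sdiff]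
  refine Or.inr ⟨Set.insert_subset hyE (hFE.trans Set.sdiff_subset), hnotE, hdiff ▸ hres, ?_⟩
  rintro w (hwy | hw)
  · rwa [hwy, Set.union_singleton, hdiff, Set.sdiff_sdiff_comm, Set.insert_sdiff_singleton,
      Set.insert_eq_of_mem (show y ∈ E \ F from ⟨hyE, hyF⟩)]
  · exact hdiff ▸ hmin w hw

lemma sUnion_offending_flows_diff_subset (hmono : ∀ E₁ E₂, m V E₁ → E₂ ⊆ E₁ → m V E₂)
    (E : Set (β × β)) {Y : Set (β × β)} (hY : Y.Finite) :
    ⋃₀ offending_flows m V (E \ Y) ⊆ ⋃₀ offending_flows m V E := by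
  induction Y, hY using Set.Finite.induction_on with
  | empty => rw [Set.sdiff_empty]
  | @insert y Y _ _ ih =>
    refine subset_trans ?_ ih
    rintro x ⟨F, hF, hx⟩
    rw [Set.insert_eq, Set.union_comm, ← Set.sdiff_sdiff] at hF
    rcases offending_flows_of_diff_singleton hmono hF with hF | hF
    · exact ⟨F, hF, hx⟩
    · exact ⟨_, hF, Set.mem_insert_of_mem y hx⟩

lemma sUnion_get_offending_flows_subset_of_subset {M' : Set (Set β → Set (β × β) → Prop)}
    (hmono : ∀ m ∈ M', ∀ E₁ E₂, m V E₁ → E₂ ⊆ E₁ → m V E₂)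
    {E₁ E₂ : Set (β × β)} (h : E₂ ⊆ E₁) (hfin : (E₁ \ E₂).Finite) :
    ⋃₀ get_offending_flows M' V E₂ ⊆ ⋃₀ get_offending_flows M' V E₁ := by
  rintro x ⟨F, hF, hx⟩
  simp only [get_offending_flows, Set.mem_iUnion] at hF
  obtain ⟨m, hm, hF⟩ := hF
  rw [← Set.sdiff_sdiff_cancel_left h] at hF
  obtain ⟨G, hG, hxG⟩ := sUnion_offending_flows_diff_subset (hmono m hm) E₁ hfin ⟨F, hF, hx⟩
  exact ⟨G, Set.mem_biUnion hm hG, hxG⟩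

end OffendingFlows

section Filters

variable {β : Type*} {V : Set β} {E : Set (β × β)} {M : Set (SecurityInvariant β)}

lemma forall_mem_getIFS {P : (Set β → Set (β × β) → Prop) → Prop} (h : ∀ m ∈ M, P m.pred) :
    ∀ f ∈ getIFS M, P f := by
  rintro f ⟨m, hm, -, rfl⟩
  exact h m hm

lemma forall_mem_getACS {P : (Set β → Set (β × β) → Prop) → Prop} (h : ∀ m ∈ M, P m.pred) :
    ∀ f ∈ getACS M, P f := by
  rintro f ⟨m, hm, -, rfl⟩
  exact h m hm

lemma filterIFS_sound {a : List (β × β)} (es : List (β × β))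
    (ha : ∀ m ∈ getIFS M, m V (alphaEdges E {x | x ∈ a})) :
    ∀ m ∈ getIFS M, m V (alphaEdges E {x | x ∈ filterIFS V E M a es}) := by
  induction es generalizing a with
  | nil => rwa [filterIFS]
  | cons e es ih =>
    rw [filterIFS]
    split
    · next he => exact ih he
    · exact ih ha

lemma filterACS_sound {a : List (β × β)} (es : List (β × β))
    (ha : ∀ F ∈ get_offending_flows (getACS M) V (alphaEdges E {x | x ∈ a}),
      F ⊆ backflows {x | x ∈ a}) :
    ∀ F ∈ get_offending_flows (getACS M) V (alphaEdges E {x | x ∈ filterACS V E M a es}),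
      F ⊆ backflows {x | x ∈ filterACS V E M a es} := by
  induction es generalizing a with
  | nil => rwa [filterACS]
  | cons e es ih =>
    rw [filterACS]
    split
    · next he => exact ih he.2
    · exact ih ha

lemma mem_filterACS {a es : List (β × β)} {x : β × β} (hx : x ∈ filterACS V E M a es) :
    x ∈ a ∨ x ∈ es ∧ x ∉ backflows E := by
  induction es generalizing a with
  | nil => rw [filterACS] at hx; exact Or.inl hx
  | cons e es ih =>
    rw [filterACS] at hx
    split at hx
    · next he =>
      rcases ih hx with hxa | ⟨hxes, hxE⟩
      · rcases List.mem_cons.mp hxa with rfl | hxa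
        · exact Or.inr ⟨List.mem_cons_self, he.1⟩
        · exact Or.inl hxa
      · exact Or.inr ⟨List.mem_cons_of_mem e hxes, hxE⟩
    · rcases ih hx with hxa | ⟨hxes, hxE⟩
      · exact Or.inl hxa
      · exact Or.inr ⟨List.mem_cons_of_mem e hxes, hxE⟩

end Filters

lemma sUnion_get_offending_flows_alphaEdges_subset {β : Type*} {V : Set β}
    {M' : Set (Set β → Set (β × β) → Prop)}
    (hmono : ∀ m ∈ M', ∀ E₁ E₂, m V E₁ → E₂ ⊆ E₁ → m V E₂)
    {E A S : Set (β × β)} (hA : A.Finite) (hAE : Disjoint A (backflows E)) (hSA : S ⊆ A)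
    (hSE : S ⊆ E) (hAcrit : ⋃₀ get_offending_flows M' V (alphaEdges E A) ⊆ backflows A) :
    ⋃₀ get_offending_flows M' V (alphaEdges E S) ⊆ backflows S \ E := by
  have hfin : (alphaEdges E A \ alphaEdges E S).Finite :=
    (hA.union hA.backflows).subset fun x ⟨hxA, hxS⟩ => by
      rcases hxA with (hxE | hxA) | hxA
      · exact absurd (Or.inl (Or.inl hxE)) hxS
      · exact Or.inl hxA
      · exact Or.inr hxA
  intro x hx
  have hxA : x ∈ backflows A :=
    hAcrit (sUnion_get_offending_flows_subset_of_subset hmono (alphaEdges_mono E hSA) hfin hx)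
  have hxE : x ∉ E := fun hxE => hAE.notMem_of_mem_left hxA hxE
  refine ⟨?_, hxE⟩
  rcases sUnion_get_offending_flows_subset M' _ hx with (hxE' | hxS) | hxS
  · exact absurd hxE' hxE
  · exact absurd (hSE hxS) hxE
  · exact hxS

theorem stmt_15_general {α : Type*} (M : Set (SecurityInvariant α))
    (V : Set α) (E : Set (α × α)) (e : List (α × α))
    (h_mono : ∀ m ∈ M, ∀ (V' : Set α) (E₁ E₂ : Set (α × α)),
        m.pred V' E₁ → E₂ ⊆ E₁ → m.pred V' E₂)
    (h_valid : ∀ m ∈ M, m.pred V E)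
    (he : ∀ x ∈ e, x ∈ E) :
    (∀ m ∈ getIFS M,
      m V (E ∪ ({x | x ∈ filterACS V E M [] e} ∩ {x | x ∈ filterIFS V E M [] e}) ∪
        backflows ({x | x ∈ filterACS V E M [] e} ∩ {x | x ∈ filterIFS V E M [] e}))) ∧
    (⋃₀ get_offending_flows (getACS M) V
        (E ∪ ({x | x ∈ filterACS V E M [] e} ∩ {x | x ∈ filterIFS V E M [] e}) ∪
          backflows ({x | x ∈ filterACS V E M [] e} ∩ {x | x ∈ filterIFS V E M [] e})) ⊆
      backflows ({x | x ∈ filterACS V E M [] e} ∩ {x | x ∈ filterIFS V E M [] e}) \ E) := by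
  set A := filterACS V E M [] e
  set I := filterIFS V E M [] e
  have hbase : alphaEdges E {x | x ∈ ([] : List (α × α))} = E := by
    simpa using alphaEdges_empty E
  have hA : ∀ x ∈ A, x ∈ E ∧ x ∉ backflows E := fun x hx => by
    simpa using (mem_filterACS hx).imp_right fun h => ⟨he x h.1, h.2⟩
  have hmono : ∀ m ∈ M, ∀ E₁ E₂, m.pred V E₁ → E₂ ⊆ E₁ → m.pred V E₂ :=
    fun m hm => h_mono m hm V
  constructor
  · intro m hm
    have hI := filterIFS_sound e (forall_mem_getIFS (fun m hm => hbase ▸ h_valid m hm)) m hm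
    have hIFSmono : ∀ f ∈ getIFS M, ∀ E₁ E₂, f V E₁ → E₂ ⊆ E₁ → f V E₂ := forall_mem_getIFS hmono
    exact hIFSmono m hm _ _ hI (alphaEdges_mono E Set.inter_subset_right)
  · have hAcrit := filterACS_sound (M := M) (V := V) (E := E) (a := []) e (by
      rw [hbase, get_offending_flows_eq_empty (forall_mem_getACS h_valid)]
      exact fun F hF => hF.elim)
    exact sUnion_get_offending_flows_alphaEdges_subset (forall_mem_getACS hmono) A.finite_toSet
      (Set.disjoint_left.mpr fun x hx => (hA x hx).2) Set.inter_subset_left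
      (fun x hx => (hA x hx.1).1) (Set.sUnion_subset_iff.mpr hAcrit)

theorem stmt_15 {α : Type*} (M : Set (SecurityInvariant α))
    (V : Set α) (E : Set (α × α)) (e : List (α × α))
    (h_empty : ∀ m ∈ M, ∀ V' : Set α, m.pred V' ∅)
    (h_mono : ∀ m ∈ M, ∀ (V' : Set α) (E₁ E₂ : Set (α × α)),
        m.pred V' E₁ → E₂ ⊆ E₁ → m.pred V' E₂)
    (h_valid : ∀ m ∈ M, m.pred V E)
    (he : ∀ x ∈ e, x ∈ E) :
    (∀ m ∈ getIFS M,
      m V (E ∪ ({x | x ∈ filterACS V E M [] e} ∩ {x | x ∈ filterIFS V E M [] e}) ∪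
        backflows ({x | x ∈ filterACS V E M [] e} ∩ {x | x ∈ filterIFS V E M [] e}))) ∧
    (⋃₀ get_offending_flows (getACS M) V
        (E ∪ ({x | x ∈ filterACS V E M [] e} ∩ {x | x ∈ filterIFS V E M [] e}) ∪
          backflows ({x | x ∈ filterACS V E M [] e} ∩ {x | x ∈ filterIFS V E M [] e})) ⊆
      backflows ({x | x ∈ filterACS V E M [] e} ∩ {x | x ∈ filterIFS V E M [] e}) \ E) :=
  stmt_15_general M V E e h_mono h_valid he
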